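/- arXiv:2601.09183 — 2 statements merged into one kernel-verified Lean document; each statement's English description precedes it below -/
import Mathlib

section
/- Let y : [0,∞) → [0,∞) be differentiable and let z, α, β : [0,∞) → [0,∞) be continuous. If y′(t) + z(t) ≤ α(t) y(t) + β(t) for all t > 0, then for all t ≥ 0, y(t) + ∫₀ᵗ z(s) ds ≤ (y(0) + ∫₀ᵗ β(s) ds) · (1 + (∫₀ᵗ α(s) ds) · exp(∫₀ᵗ α(s) ds)). -/
/-!
Along the differential inequality `y' ≤ α y + β` the quantity `y · exp (-∫ α)` grows at most
like `∫ β`, which bounds `y` on `[0, t]` by `(y 0 + ∫₀ᵗ β) · exp (∫₀ᵗ α)`. Integrating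
`y' + z ≤ α y + β` once and inserting this bound into `∫₀ᵗ α y` gives the estimate.
-/

open MeasureTheory Set

namespace ContinuousOn

variable {f : ℝ → ℝ} {a b t : ℝ}

theorem intervalIntegrable_of_Ici (hf : ContinuousOn f (Ici a)) (hb : a ≤ b) (ht : a ≤ t) :
    IntervalIntegrable f volume b t :=
  (hf.mono fun _ hx => (le_min hb ht).trans hx.1).intervalIntegrable

theorem hasDerivAt_integral_of_Ici (hf : ContinuousOn f (Ici a)) (ht : a < t) :
    HasDerivAt (fun u => ∫ s in a..u, f s) (f t) t :=
  intervalIntegral.integral_hasDerivAt_right (hf.intervalIntegrable_of_Ici le_rfl ht.le)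
    ((hf.mono Ioi_subset_Ici_self).stronglyMeasurableAtFilter isOpen_Ioi t ht)
    (hf.continuousAt (Ici_mem_nhds ht))

theorem continuousOn_integral_Icc (hf : ContinuousOn f (Icc a b)) (hab : a ≤ b) :
    ContinuousOn (fun u => ∫ s in a..u, f s) (Icc a b) := by
  rw [← uIcc_of_le hab] at hf ⊢
  exact intervalIntegral.continuousOn_primitive_interval hf.integrableOn_uIcc

theorem monotoneOn_integral_of_nonneg (hf : ContinuousOn f (Ici a))
    (hf₀ : ∀ t ∈ Ici a, 0 ≤ f t) : MonotoneOn (fun t => ∫ s in a..t, f s) (Ici a) :=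
  fun _ hs _ ht hst => intervalIntegral.integral_mono_interval le_rfl hs hst
    (ae_restrict_of_forall_mem measurableSet_Ioc fun u hu => hf₀ u hu.1.le)
    (hf.intervalIntegrable_of_Ici le_rfl ht)

end ContinuousOn

theorem hasDerivAt_deriv_of_differentiableOn_Ici {y : ℝ → ℝ} {a t : ℝ}
    (hy : DifferentiableOn ℝ y (Ici a)) (ht : a < t) : HasDerivAt y (deriv y t) t :=
  ((hy t ht.le).differentiableAt (Ici_mem_nhds ht)).hasDerivAt

theorem le_mul_exp_integral_of_deriv_le {y α β : ℝ → ℝ} {a t : ℝ}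
    (hy : DifferentiableOn ℝ y (Ici a))
    (hαc : ContinuousOn α (Ici a)) (hα : ∀ s ∈ Ici a, 0 ≤ α s)
    (hβc : ContinuousOn β (Ici a)) (hβ : ∀ s ∈ Ici a, 0 ≤ β s)
    (h : ∀ s, a < s → deriv y s ≤ α s * y s + β s) (ht : a ≤ t) :
    y t ≤ (y a + ∫ s in a..t, β s) * Real.exp (∫ s in a..t, α s) := by
  set A : ℝ → ℝ := fun u => ∫ s in a..u, α s
  have hderiv : ∀ s, a < s → HasDerivAt (fun u => y u * Real.exp (-A u))
      (deriv y s * Real.exp (-A s) + y s * (Real.exp (-A s) * -α s)) s := fun s hs =>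
    (hasDerivAt_deriv_of_differentiableOn_Ici hy hs).mul
      (hαc.hasDerivAt_integral_of_Ici hs).neg.exp
  have hcont : ContinuousOn (fun u => y u * Real.exp (-A u)) (Icc a t) :=
    (hy.continuousOn.mono Icc_subset_Ici_self).mul
      ((hαc.mono Icc_subset_Ici_self).continuousOn_integral_Icc ht).neg.rexp
  have hgrowth := intervalIntegral.sub_le_integral_of_hasDeriv_right_of_le ht hcont
    (fun s hs => (hderiv s hs.1).hasDerivWithinAt)
    ((hβc.mono Icc_subset_Ici_self).integrableOn_Icc) fun s hs => by
      have hE : Real.exp (-A s) ≤ 1 :=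
        Real.exp_le_one_iff.2 <| neg_nonpos.2 <| intervalIntegral.integral_nonneg hs.1.le
          fun u hu => hα u hu.1
      calc deriv y s * Real.exp (-A s) + y s * (Real.exp (-A s) * -α s)
          = (deriv y s - α s * y s) * Real.exp (-A s) := by ring
        _ ≤ β s * Real.exp (-A s) :=
          mul_le_mul_of_nonneg_right (by linarith [h s hs.1]) (Real.exp_pos _).le
        _ ≤ β s := mul_le_of_le_one_right (hβ s hs.1.le) hE
  simpa only [A, intervalIntegral.integral_same, neg_zero, Real.exp_zero, mul_one,
    Real.exp_neg, ← div_eq_mul_inv, sub_le_iff_le_add', div_le_iff₀ (Real.exp_pos _)]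
    using hgrowth

theorem add_integral_le_of_deriv_add_le {y z w : ℝ → ℝ} {a t : ℝ}
    (hy : DifferentiableOn ℝ y (Ici a)) (hzc : ContinuousOn z (Ici a))
    (hwc : ContinuousOn w (Ici a)) (h : ∀ s, a < s → deriv y s + z s ≤ w s) (ht : a ≤ t) :
    y t + ∫ s in a..t, z s ≤ y a + ∫ s in a..t, w s := by
  have hFTC := intervalIntegral.sub_le_integral_of_hasDeriv_right_of_le ht
    (hy.continuousOn.mono Icc_subset_Ici_self)
    (fun s hs => (hasDerivAt_deriv_of_differentiableOn_Ici hy hs.1).hasDerivWithinAt)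
    (φ := fun s => w s - z s) (((hwc.sub hzc).mono Icc_subset_Ici_self).integrableOn_Icc)
    fun s hs => le_sub_iff_add_le.2 (h s hs.1)
  rw [intervalIntegral.integral_sub (hwc.intervalIntegrable_of_Ici le_rfl ht)
    (hzc.intervalIntegrable_of_Ici le_rfl ht)] at hFTC
  linarith

/-- The Gronwall inequality, second form. -/
theorem gronwall_second (y z α β : ℝ → ℝ)
    (hy : DifferentiableOn ℝ y (Ici (0 : ℝ)))
    (hynn : ∀ t ∈ Ici (0 : ℝ), 0 ≤ y t)
    (hzc : ContinuousOn z (Ici (0 : ℝ))) (hznn : ∀ t ∈ Ici (0 : ℝ), 0 ≤ z t)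
    (hac : ContinuousOn α (Ici (0 : ℝ))) (hann : ∀ t ∈ Ici (0 : ℝ), 0 ≤ α t)
    (hbc : ContinuousOn β (Ici (0 : ℝ))) (hbnn : ∀ t ∈ Ici (0 : ℝ), 0 ≤ β t)
    (hineq : ∀ t : ℝ, 0 < t → deriv y t + z t ≤ α t * y t + β t) :
    ∀ t : ℝ, 0 ≤ t →
      y t + (∫ s in (0 : ℝ)..t, z s)
        ≤ (y 0 + ∫ s in (0 : ℝ)..t, β s)
            * (1 + (∫ s in (0 : ℝ)..t, α s) * Real.exp (∫ s in (0 : ℝ)..t, α s)) := by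
  intro t ht
  set A := ∫ s in (0 : ℝ)..t, α s
  set B := ∫ s in (0 : ℝ)..t, β s
  have hαy : ContinuousOn (fun s => α s * y s) (Ici 0) := hac.mul hy.continuousOn
  have hbound : ∀ s ∈ Icc 0 t, y s ≤ (y 0 + B) * Real.exp A := fun s hs =>
    calc y s ≤ (y 0 + ∫ u in (0 : ℝ)..s, β u) * Real.exp (∫ u in (0 : ℝ)..s, α u) :=
          le_mul_exp_integral_of_deriv_le hy hac hann hbc hbnn
            (fun r hr => by linarith [hineq r hr, hznn r hr.le]) hs.1
      _ ≤ (y 0 + B) * Real.exp A := by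
          have hB : 0 ≤ B := intervalIntegral.integral_nonneg ht fun u hu => hbnn u hu.1
          gcongr
          · linarith [hynn 0 self_mem_Ici]
          · exact hbc.monotoneOn_integral_of_nonneg hbnn hs.1 (mem_Ici.2 ht) hs.2
          · exact hac.monotoneOn_integral_of_nonneg hann hs.1 (mem_Ici.2 ht) hs.2
  have hαy_le : ∫ s in (0 : ℝ)..t, α s * y s ≤ A * ((y 0 + B) * Real.exp A) := by
    rw [← intervalIntegral.integral_mul_const]
    exact intervalIntegral.integral_mono_on ht (hαy.intervalIntegrable_of_Ici le_rfl ht)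
      ((hac.intervalIntegrable_of_Ici le_rfl ht).mul_const _)
      fun s hs => mul_le_mul_of_nonneg_left (hbound s hs) (hann s hs.1)
  have hint := add_integral_le_of_deriv_add_le (w := fun s => α s * y s + β s)
    hy hzc (hαy.add hbc) hineq ht
  rw [intervalIntegral.integral_add (hαy.intervalIntegrable_of_Ici le_rfl ht)
    (hbc.intervalIntegrable_of_Ici le_rfl ht)] at hint
  calc y t + ∫ s in (0 : ℝ)..t, z s ≤ y 0 + ((∫ s in (0 : ℝ)..t, α s * y s) + B) := hint
    _ ≤ y 0 + (A * ((y 0 + B) * Real.exp A) + B) := by gcongr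
    _ = (y 0 + B) * (1 + A * Real.exp A) := by ring
end

section
/- Let h > 0, G = (0,1)², Ω = G × (−h,0), and let v : closure(Ω) → ℝ² be continuously differentiable. Set v̄(x,y) = (1/h)∫_{−h}^0 v(x,y,z) dz and ṽ = v − v̄. Then for every q ∈ [1,∞), ‖ṽ‖_{L^q(Ω)} ≤ h ‖∂_z v‖_{L^q(Ω)}. -/
open MeasureTheory Set

noncomputable section

/-- Points of 3D space, with coordinates `(x, y, z)`. -/
abbrev Pt : Type := ℝ × ℝ × ℝ

/-- Values of the horizontal velocity: `ℝ²` with the Euclidean norm. -/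
abbrev V2 : Type := EuclideanSpace ℝ (Fin 2)

section Derivs

variable {E : Type*} [NormedAddCommGroup E] [NormedSpace ℝ E]

/-- Partial derivative in the `x` direction. -/
def pdX (f : Pt → E) (p : Pt) : E := deriv (fun s => f (s, p.2.1, p.2.2)) p.1

/-- Partial derivative in the `y` direction. -/
def pdY (f : Pt → E) (p : Pt) : E := deriv (fun s => f (p.1, s, p.2.2)) p.2.1

/-- Partial derivative in the `z` direction. -/
def pdZ (f : Pt → E) (p : Pt) : E := deriv (fun s => f (p.1, p.2.1, s)) p.2.2

/-- The `i`-th partial derivative, `i : Fin 3`. -/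
def pD (i : Fin 3) (f : Pt → E) (p : Pt) : E :=
  if i = 0 then pdX f p else if i = 1 then pdY f p else pdZ f p

/-- `|∇f|²`, the squared Euclidean norm of the full spatial gradient array. -/
def gradSq (f : Pt → E) (p : Pt) : ℝ :=
  ‖pdX f p‖ ^ 2 + ‖pdY f p‖ ^ 2 + ‖pdZ f p‖ ^ 2

/-- `|∇_H f|²`, the squared Euclidean norm of the horizontal gradient array. -/
def gradHSq (f : Pt → E) (p : Pt) : ℝ := ‖pdX f p‖ ^ 2 + ‖pdY f p‖ ^ 2

/-- `|∇²f|²`, the squared Euclidean norm of the array of all second spatial derivatives. -/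
def hessSq (f : Pt → E) (p : Pt) : ℝ :=
  ∑ i : Fin 3, ∑ j : Fin 3, ‖pD i (pD j f) p‖ ^ 2

/-- `|∇∇_H f|²`: second derivatives involving at least one horizontal derivative. -/
def hessHSq (f : Pt → E) (p : Pt) : ℝ :=
  ∑ i : Fin 3, (‖pD i (pdX f) p‖ ^ 2 + ‖pD i (pdY f) p‖ ^ 2)

/-- The spatial Laplacian. -/
def lap (f : Pt → E) (p : Pt) : E := pdX (pdX f) p + pdY (pdY f) p + pdZ (pdZ f) p

end Derivs

/-- The horizontal square `G = (0,1)²`. -/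
def GSq : Set (ℝ × ℝ) := Ioo (0 : ℝ) 1 ×ˢ Ioo (0 : ℝ) 1

/-- The domain `Ω = G × (−h, 0)`. -/
def Omega3 (h : ℝ) : Set Pt := Ioo (0 : ℝ) 1 ×ˢ (Ioo (0 : ℝ) 1 ×ˢ Ioo (-h) 0)

section Norms

variable {E : Type*} [NormedAddCommGroup E] [NormedSpace ℝ E]

/-- `‖f‖_{L^q(Ω)}^q = ∫_Ω |f|^q`. -/
def LqPow (h q : ℝ) (f : Pt → E) : ℝ := ∫ p in Omega3 h, ‖f p‖ ^ q

/-- `‖f‖_{L^q(Ω)}`. -/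
def LqNorm (h q : ℝ) (f : Pt → E) : ℝ := (LqPow h q f) ^ (1 / q)

/-- `‖f‖_{L²(Ω)}²`. -/
def L2sq (h : ℝ) (f : Pt → E) : ℝ := ∫ p in Omega3 h, ‖f p‖ ^ 2

/-- `‖∇f‖_{L²(Ω)}²`. -/
def gradL2sq (h : ℝ) (f : Pt → E) : ℝ := ∫ p in Omega3 h, gradSq f p

/-- `‖f‖_{H¹(Ω)}² = ‖f‖_{L²(Ω)}² + ‖∇f‖_{L²(Ω)}²`. -/
def H1sq (h : ℝ) (f : Pt → E) : ℝ := L2sq h f + gradL2sq h f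

/-- `‖∇²f‖_{L²(Ω)}²`. -/
def hessL2sq (h : ℝ) (f : Pt → E) : ℝ := ∫ p in Omega3 h, hessSq f p

/-- `‖∇_H f‖_{L²(Ω)}²`. -/
def gradHL2sq (h : ℝ) (f : Pt → E) : ℝ := ∫ p in Omega3 h, gradHSq f p

/-- `‖∇∇_H f‖_{L²(Ω)}²`. -/
def hessHL2sq (h : ℝ) (f : Pt → E) : ℝ := ∫ p in Omega3 h, hessHSq f p

end Norms

/-- Horizontal divergence of a horizontal vector field on `Ω`. -/
def divH (f : Pt → V2) (p : Pt) : ℝ := pdX f p 0 + pdY f p 1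

/-- Vertical average `f̄(x,y) = (1/h) ∫_{−h}^0 f(x,y,z) dz`. -/
def vertAvg (h : ℝ) (f : Pt → V2) (q : ℝ × ℝ) : V2 :=
  (1 / h) • ∫ z in (-h)..(0 : ℝ), f (q.1, q.2, z)

/-- Deviation from the vertical average, `f̃ = f − f̄`. -/
def tildeDev (h : ℝ) (f : Pt → V2) (p : Pt) : V2 := f p - vertAvg h f (p.1, p.2.1)

/-- Horizontal divergence of a vector field on `G`. -/
def divH2 (f : (ℝ × ℝ) → V2) (q : ℝ × ℝ) : ℝ :=
  deriv (fun s => f (s, q.2) 0) q.1 + deriv (fun s => f (q.1, s) 1) q.2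

/-- Horizontal gradient of a scalar function on `G`, as a vector in `ℝ²`. -/
def gradH2 (g : (ℝ × ℝ) → ℝ) (q : ℝ × ℝ) : V2 :=
  (WithLp.equiv 2 (Fin 2 → ℝ)).symm
    ![deriv (fun s => g (s, q.2)) q.1, deriv (fun s => g (q.1, s)) q.2]

/-- The vertical velocity `w(x,y,z,t) = −∫_{−h}^z div_H v(x,y,ζ,t) dζ`. -/
def wvel (h : ℝ) (v : Pt → ℝ → V2) (p : Pt) (t : ℝ) : ℝ :=
  -∫ ζ in (-h)..p.2.2, divH (fun q => v q t) (p.1, p.2.1, ζ)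

/-- The convection term `(v·∇_H)v + w ∂_z v`. -/
def convTerm (h : ℝ) (v : Pt → ℝ → V2) (p : Pt) (t : ℝ) : V2 :=
  v p t 0 • pdX (fun q => v q t) p + v p t 1 • pdY (fun q => v q t) p
    + wvel h v p t • pdZ (fun q => v q t) p

/-- The common part of a smooth solution of the primitive equations on `Ω × [0,T]`,
with initial datum `a` and pressure `pr`: regularity (`C²` in space, `C¹` in time,
smooth up to the boundary, via globally defined extensions that are `1`-periodic
horizontally), zero mean of the pressure, the momentum equation, the divergence-free
condition for the vertical average, horizontal periodicity, and the initial condition. -/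
structure PECore (h T : ℝ) (v : Pt → ℝ → V2) (pr : (ℝ × ℝ) → ℝ → ℝ)
    (a : Pt → V2) : Prop where
  smooth_space : ∀ t ∈ Icc (0 : ℝ) T, ContDiff ℝ 2 (fun p => v p t)
  smooth_time : ∀ p : Pt, ContDiffOn ℝ 1 (v p) (Icc (0 : ℝ) T)
  cont_joint : Continuous (Function.uncurry v)
  smooth_pr : ∀ t ∈ Icc (0 : ℝ) T, ContDiff ℝ 2 (fun q => pr q t)
  pr_mean : ∀ t ∈ Icc (0 : ℝ) T, (∫ q in GSq, pr q t) = 0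
  momentum : ∀ p ∈ Omega3 h, ∀ t ∈ Ioo (0 : ℝ) T,
    deriv (v p) t + convTerm h v p t - lap (fun q => v q t) p
      + gradH2 (fun q => pr q t) (p.1, p.2.1) = 0
  div_vbar : ∀ q ∈ GSq, ∀ t ∈ Ioo (0 : ℝ) T,
    divH2 (vertAvg h (fun p => v p t)) q = 0
  periodic_x : ∀ (p : Pt) (t : ℝ), v (p.1 + 1, p.2.1, p.2.2) t = v p t
  periodic_y : ∀ (p : Pt) (t : ℝ), v (p.1, p.2.1 + 1, p.2.2) t = v p t
  periodic_pr_x : ∀ (q : ℝ × ℝ) (t : ℝ), pr (q.1 + 1, q.2) t = pr q t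
  periodic_pr_y : ∀ (q : ℝ × ℝ) (t : ℝ), pr (q.1, q.2 + 1) t = pr q t
  initial : ∀ p ∈ Omega3 h, v p 0 = a p

/-! For fixed `(x, y)`, `ṽ(x,y,z)` is the average over `ζ` of `v(z) - v(ζ) = ∫_ζ^z ∂_z v`, so
`|ṽ| ≤ ∫_{-h}^0 |∂_z v|`, and Jensen's inequality bounds its `q`-th power by
`h^{q-1} ∫_{-h}^0 |∂_z v|^q`. Integrating in `z` and then over `G` (Tonelli) gives
`‖ṽ‖_q^q ≤ h^q ‖∂_z v‖_q^q`. The argument runs with lower Lebesgue integrals, so that the left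
side needs no measurability; regularity up to the boundary makes `∂_z v` bounded, hence the
right side finite. -/

open scoped ENNReal

theorem rpow_lintegral_enorm_le {α E : Type*} [MeasurableSpace α] [NormedAddCommGroup E]
    {μ : Measure α} {f : α → E} (hf : AEStronglyMeasurable f μ) {q : ℝ} (hq : 1 ≤ q) :
    (∫⁻ a, ‖f a‖ₑ ∂μ) ^ q ≤ μ univ ^ (q - 1) * ∫⁻ a, ‖f a‖ₑ ^ q ∂μ := by
  have hq0 : 0 < q := by linarith
  have holder := eLpNorm'_le_eLpNorm'_mul_rpow_measure_univ one_pos hq hf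
  rw [eLpNorm'_eq_lintegral_enorm, eLpNorm'_eq_lintegral_enorm] at holder
  simp only [ENNReal.rpow_one, div_one] at holder
  calc (∫⁻ a, ‖f a‖ₑ ∂μ) ^ q
      ≤ ((∫⁻ a, ‖f a‖ₑ ^ q ∂μ) ^ (1 / q) * μ univ ^ (1 - 1 / q)) ^ q := by gcongr
    _ = μ univ ^ (q - 1) * ∫⁻ a, ‖f a‖ₑ ^ q ∂μ := by
      rw [ENNReal.mul_rpow_of_nonneg _ _ hq0.le, ← ENNReal.rpow_mul, ← ENNReal.rpow_mul,
        one_div_mul_cancel hq0.ne', ENNReal.rpow_one, sub_mul, one_div_mul_cancel hq0.ne',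
        one_mul, mul_comm]

section OneDim

variable {E : Type*} [NormedAddCommGroup E] [NormedSpace ℝ E] [CompleteSpace E]
  {u u' : ℝ → E} {a b : ℝ}

theorem enorm_sub_le_lintegral_enorm_deriv (hu : ContinuousOn u (Icc a b))
    (hd : ∀ s ∈ Ioo a b, HasDerivAt u (u' s) s) (hu' : IntegrableOn u' (Ioo a b))
    {y z : ℝ} (hy : y ∈ Icc a b) (hz : z ∈ Icc a b) :
    ‖u z - u y‖ₑ ≤ ∫⁻ s in Ioo a b, ‖u' s‖ₑ := by
  wlog hyz : y ≤ z generalizing y z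
  · rw [enorm_sub_rev]
    exact this hz hy (le_of_not_ge hyz)
  have hIcc : Icc y z ⊆ Icc a b := Icc_subset_Icc hy.1 hz.2
  have hint : IntegrableOn u' (Icc a b) := (integrableOn_Icc_iff_integrableOn_Ioo).2 hu'
  have ftc : ∫ s in y..z, u' s = u z - u y :=
    intervalIntegral.integral_eq_sub_of_hasDerivAt_of_le hyz (hu.mono hIcc)
      (fun s hs => hd s (Ioo_subset_Ioo hy.1 hz.2 hs))
      ((intervalIntegrable_iff_integrableOn_Ioc_of_le hyz).2
        (hint.mono_set (Ioc_subset_Icc_self.trans hIcc)))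
  calc ‖u z - u y‖ₑ = ‖∫ s in Ioc y z, u' s‖ₑ := by
        rw [← ftc, intervalIntegral.integral_of_le hyz]
    _ ≤ ∫⁻ s in Ioc y z, ‖u' s‖ₑ := enorm_integral_le_lintegral_enorm _
    _ ≤ ∫⁻ s in Icc a b, ‖u' s‖ₑ := lintegral_mono_set (Ioc_subset_Icc_self.trans hIcc)
    _ = ∫⁻ s in Ioo a b, ‖u' s‖ₑ := setLIntegral_congr Ioo_ae_eq_Icc.symm

theorem enorm_sub_average_le_lintegral_enorm_deriv (hab : a < b) (hu : ContinuousOn u (Icc a b))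
    (hd : ∀ s ∈ Ioo a b, HasDerivAt u (u' s) s) (hu' : IntegrableOn u' (Ioo a b))
    {z : ℝ} (hz : z ∈ Icc a b) :
    ‖u z - (b - a)⁻¹ • ∫ s in a..b, u s‖ₑ ≤ ∫⁻ s in Ioo a b, ‖u' s‖ₑ := by
  have hba : 0 < b - a := sub_pos.2 hab
  set M := ∫⁻ s in Ioo a b, ‖u' s‖ₑ
  have hdev : u z - (b - a)⁻¹ • ∫ s in a..b, u s = (b - a)⁻¹ • ∫ s in a..b, (u z - u s) := by
    rw [intervalIntegral.integral_sub intervalIntegrable_const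
      (hu.intervalIntegrable_of_Icc hab.le), intervalIntegral.integral_const, smul_sub,
      smul_smul, inv_mul_cancel₀ hba.ne', one_smul]
  have hbound : ‖∫ s in a..b, (u z - u s)‖ₑ ≤ ENNReal.ofReal (b - a) * M :=
    calc ‖∫ s in a..b, (u z - u s)‖ₑ ≤ ∫⁻ s in Ioc a b, ‖u z - u s‖ₑ := by
          rw [intervalIntegral.integral_of_le hab.le]
          exact enorm_integral_le_lintegral_enorm _
      _ ≤ ∫⁻ _ in Ioc a b, M := setLIntegral_mono' measurableSet_Ioc fun s hs =>
          enorm_sub_le_lintegral_enorm_deriv hu hd hu' (Ioc_subset_Icc_self hs) hz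
      _ = ENNReal.ofReal (b - a) * M := by rw [setLIntegral_const, Real.volume_Ioc, mul_comm]
  calc ‖u z - (b - a)⁻¹ • ∫ s in a..b, u s‖ₑ
      = ENNReal.ofReal (b - a)⁻¹ * ‖∫ s in a..b, (u z - u s)‖ₑ := by
        rw [hdev, enorm_smul, Real.enorm_of_nonneg (inv_nonneg.2 hba.le)]
    _ ≤ ENNReal.ofReal (b - a)⁻¹ * (ENNReal.ofReal (b - a) * M) := by gcongr
    _ = M := by
        rw [← mul_assoc, ← ENNReal.ofReal_mul (inv_nonneg.2 hba.le), inv_mul_cancel₀ hba.ne',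
          ENNReal.ofReal_one, one_mul]

theorem lintegral_enorm_sub_average_rpow_le (hab : a < b) {q : ℝ} (hq : 1 ≤ q)
    (hu : ContinuousOn u (Icc a b)) (hd : ∀ s ∈ Ioo a b, HasDerivAt u (u' s) s)
    (hu' : IntegrableOn u' (Ioo a b)) :
    ∫⁻ z in Ioo a b, ‖u z - (b - a)⁻¹ • ∫ s in a..b, u s‖ₑ ^ q
      ≤ ENNReal.ofReal (b - a) ^ q * ∫⁻ s in Ioo a b, ‖u' s‖ₑ ^ q := by
  set L := ENNReal.ofReal (b - a)
  have hL : L * L ^ (q - 1) = L ^ q := by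
    conv_rhs => rw [← add_sub_cancel 1 q, ENNReal.rpow_add_of_nonneg _ _ zero_le_one
      (by linarith), ENNReal.rpow_one]
  calc ∫⁻ z in Ioo a b, ‖u z - (b - a)⁻¹ • ∫ s in a..b, u s‖ₑ ^ q
      ≤ ∫⁻ _ in Ioo a b, (∫⁻ s in Ioo a b, ‖u' s‖ₑ) ^ q :=
        setLIntegral_mono' measurableSet_Ioo fun z hz => ENNReal.rpow_le_rpow
          (enorm_sub_average_le_lintegral_enorm_deriv hab hu hd hu' (Ioo_subset_Icc_self hz))
          (by linarith)
    _ = L * (∫⁻ s in Ioo a b, ‖u' s‖ₑ) ^ q := by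
        rw [setLIntegral_const, Real.volume_Ioo, mul_comm]
    _ ≤ L * (L ^ (q - 1) * ∫⁻ s in Ioo a b, ‖u' s‖ₑ ^ q) := by
        gcongr
        simpa only [Measure.restrict_apply_univ, Real.volume_Ioo]
          using rpow_lintegral_enorm_le hu'.aestronglyMeasurable hq
    _ = L ^ q * ∫⁻ s in Ioo a b, ‖u' s‖ₑ ^ q := by rw [← mul_assoc, hL]

end OneDim

section Domain

variable {h : ℝ}

theorem isOpen_omega3 : IsOpen (Omega3 h) :=
  isOpen_Ioo.prod (isOpen_Ioo.prod isOpen_Ioo)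

theorem closure_omega3 (hh : 0 < h) :
    closure (Omega3 h) = Icc 0 1 ×ˢ (Icc 0 1 ×ˢ Icc (-h) 0) := by
  rw [Omega3, closure_prod_eq, closure_prod_eq, closure_Ioo zero_ne_one,
    closure_Ioo (neg_lt_zero.2 hh).ne]

theorem isCompact_closure_omega3 (hh : 0 < h) : IsCompact (closure (Omega3 h)) := by
  rw [closure_omega3 hh]
  exact isCompact_Icc.prod (isCompact_Icc.prod isCompact_Icc)

theorem uniqueDiffOn_closure_omega3 (hh : 0 < h) : UniqueDiffOn ℝ (closure (Omega3 h)) := by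
  rw [closure_omega3 hh]
  exact (uniqueDiffOn_Icc one_pos).prod
    ((uniqueDiffOn_Icc one_pos).prod (uniqueDiffOn_Icc (neg_lt_zero.2 hh)))

theorem lintegral_omega3_le (F : Pt → ℝ≥0∞) :
    ∫⁻ p in Omega3 h, F p
      ≤ ∫⁻ x in Ioo 0 1, ∫⁻ y in Ioo 0 1, ∫⁻ z in Ioo (-h) 0, F (x, y, z) := by
  rw [Omega3, Measure.volume_eq_prod, ← Measure.prod_restrict]
  refine (lintegral_prod_le _).trans (lintegral_mono fun x => ?_)
  rw [Measure.volume_eq_prod, ← Measure.prod_restrict]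
  exact lintegral_prod_le _

theorem lintegral_omega3_eq {F : Pt → ℝ≥0∞} (hF : AEMeasurable F (volume.restrict (Omega3 h))) :
    ∫⁻ p in Omega3 h, F p
      = ∫⁻ x in Ioo 0 1, ∫⁻ y in Ioo 0 1, ∫⁻ z in Ioo (-h) 0, F (x, y, z) := by
  rw [Omega3, Measure.volume_eq_prod, ← Measure.prod_restrict] at hF ⊢
  rw [lintegral_prod _ hF]
  refine lintegral_congr_ae ?_
  filter_upwards [hF.aestronglyMeasurable.prodMk_left] with x hx
  rw [Measure.volume_eq_prod, ← Measure.prod_restrict] at hx ⊢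
  exact lintegral_prod _ hx.aemeasurable

theorem lintegral_omega3_le_of_slices {F G : Pt → ℝ≥0∞} {c : ℝ≥0∞} (hc : c ≠ ⊤)
    (hG : AEMeasurable G (volume.restrict (Omega3 h)))
    (hFG : ∀ x ∈ Ioo (0 : ℝ) 1, ∀ y ∈ Ioo (0 : ℝ) 1,
      ∫⁻ z in Ioo (-h) 0, F (x, y, z) ≤ c * ∫⁻ z in Ioo (-h) 0, G (x, y, z)) :
    ∫⁻ p in Omega3 h, F p ≤ c * ∫⁻ p in Omega3 h, G p :=
  calc ∫⁻ p in Omega3 h, F p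
      ≤ ∫⁻ x in Ioo 0 1, ∫⁻ y in Ioo 0 1, ∫⁻ z in Ioo (-h) 0, F (x, y, z) :=
        lintegral_omega3_le F
    _ ≤ ∫⁻ x in Ioo 0 1, ∫⁻ y in Ioo 0 1, c * ∫⁻ z in Ioo (-h) 0, G (x, y, z) :=
        setLIntegral_mono' measurableSet_Ioo fun x hx =>
          setLIntegral_mono' measurableSet_Ioo fun y hy => hFG x hx y hy
    _ = c * ∫⁻ p in Omega3 h, G p := by
        simp only [lintegral_omega3_eq hG, lintegral_const_mul' _ _ hc]

end Domain

section LqNorms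

variable {E F : Type*} [NormedAddCommGroup E] [NormedAddCommGroup F] {h q : ℝ}

theorem ofReal_norm_rpow (x : E) (hq : 0 ≤ q) : ENNReal.ofReal (‖x‖ ^ q) = ‖x‖ₑ ^ q := by
  rw [← ENNReal.ofReal_rpow_of_nonneg (norm_nonneg x) hq, ofReal_norm]

theorem LqPow_le_toReal_lintegral (f : Pt → E) (hq : 0 ≤ q) :
    LqPow h q f ≤ (∫⁻ p in Omega3 h, ‖f p‖ₑ ^ q).toReal :=
  calc LqPow h q f ≤ ‖LqPow h q f‖ := Real.le_norm_self _
    _ ≤ (∫⁻ p in Omega3 h, ENNReal.ofReal ‖‖f p‖ ^ q‖).toReal :=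
        norm_integral_le_lintegral_norm _
    _ = (∫⁻ p in Omega3 h, ‖f p‖ₑ ^ q).toReal := by
        simp only [Real.norm_of_nonneg (Real.rpow_nonneg (norm_nonneg _) _), ofReal_norm_rpow _ hq]

theorem LqPow_eq_toReal_lintegral {f : Pt → E} (hq : 0 ≤ q)
    (hf : IntegrableOn (fun p => ‖f p‖ ^ q) (Omega3 h)) :
    LqPow h q f = (∫⁻ p in Omega3 h, ‖f p‖ₑ ^ q).toReal := by
  rw [LqPow, integral_eq_lintegral_of_nonneg_ae (ae_of_all _ fun p => by positivity)
    hf.aestronglyMeasurable]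
  simp only [ofReal_norm_rpow _ hq]

theorem lintegral_enorm_rpow_ne_top {f : Pt → E} (hq : 0 ≤ q)
    (hf : IntegrableOn (fun p => ‖f p‖ ^ q) (Omega3 h)) :
    ∫⁻ p in Omega3 h, ‖f p‖ₑ ^ q ≠ ⊤ := by
  have := hf.hasFiniteIntegral.ne
  simpa only [Real.enorm_of_nonneg (Real.rpow_nonneg (norm_nonneg _) _),
    ofReal_norm_rpow _ hq] using this

theorem LqNorm_le_mul_of_lintegral_le {f : Pt → E} {g : Pt → F} {c : ℝ} (hc : 0 ≤ c)
    (hq : 0 < q) (hg : IntegrableOn (fun p => ‖g p‖ ^ q) (Omega3 h))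
    (hfg : ∫⁻ p in Omega3 h, ‖f p‖ₑ ^ q ≤ ENNReal.ofReal c ^ q * ∫⁻ p in Omega3 h, ‖g p‖ₑ ^ q) :
    LqNorm h q f ≤ c * LqNorm h q g := by
  have hpow : LqPow h q f ≤ c ^ q * LqPow h q g := by
    refine (LqPow_le_toReal_lintegral f hq.le).trans ?_
    rw [LqPow_eq_toReal_lintegral hq.le hg, ← ENNReal.toReal_ofReal (by positivity : 0 ≤ c ^ q),
      ← ENNReal.toReal_mul, ← ENNReal.ofReal_rpow_of_nonneg hc hq.le]
    exact ENNReal.toReal_mono (ENNReal.mul_ne_top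
      (ENNReal.rpow_ne_top_of_nonneg hq.le ENNReal.ofReal_ne_top)
      (lintegral_enorm_rpow_ne_top hq.le hg)) hfg
  have hf0 : 0 ≤ LqPow h q f := integral_nonneg fun p => by positivity
  have hg0 : 0 ≤ LqPow h q g := integral_nonneg fun p => by positivity
  calc LqNorm h q f ≤ (c ^ q * LqPow h q g) ^ (1 / q) :=
        Real.rpow_le_rpow hf0 hpow (by positivity)
    _ = c * LqNorm h q g := by
        rw [LqNorm, Real.mul_rpow (by positivity) hg0, ← Real.rpow_mul hc,
          mul_one_div_cancel hq.ne', Real.rpow_one]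

end LqNorms

theorem closure_mem_nhds_of_isOpen {X : Type*} [TopologicalSpace X] {U : Set X} (hU : IsOpen U)
    {p : X} (hp : p ∈ U) : closure U ∈ nhds p :=
  Filter.mem_of_superset (hU.mem_nhds hp) subset_closure

section PartialZ

variable {E : Type*} [NormedAddCommGroup E] [NormedSpace ℝ E] {f : Pt → E}

theorem hasDerivAt_pdZ {p : Pt} (hf : DifferentiableAt ℝ f p) :
    HasDerivAt (fun s => f (p.1, p.2.1, s)) (pdZ f p) p.2.2 :=
  (hf.comp p.2.2 (by fun_prop)).hasDerivAt

theorem pdZ_eq_fderiv {p : Pt} (hf : DifferentiableAt ℝ f p) :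
    pdZ f p = fderiv ℝ f p (0, 0, 1) :=
  (hasDerivAt_pdZ hf).unique <| hf.hasFDerivAt.comp_hasDerivAt p.2.2
    ((hasDerivAt_const _ _).prodMk ((hasDerivAt_const _ _).prodMk (hasDerivAt_id _)))

theorem exists_continuousOn_closure_eqOn_pdZ {U : Set Pt} (hU : IsOpen U)
    (hUd : UniqueDiffOn ℝ (closure U)) (hf : ContDiffOn ℝ 1 f (closure U)) :
    ∃ w : Pt → E, ContinuousOn w (closure U) ∧ EqOn (pdZ f) w U := by
  refine ⟨fun p => fderivWithin ℝ f (closure U) p (0, 0, 1),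
    (hf.continuousOn_fderivWithin hUd le_rfl).clm_apply continuousOn_const, fun p hp => ?_⟩
  have hnhds := closure_mem_nhds_of_isOpen hU hp
  rw [pdZ_eq_fderiv ((hf.contDiffAt hnhds).differentiableAt one_ne_zero),
    ← fderivWithin_of_mem_nhds hnhds]

end PartialZ

theorem lintegral_rpow_tildeDev_slice_le {h q : ℝ} (hh : 0 < h) (hq : 1 ≤ q) {v w : Pt → V2}
    (hv : ContDiffOn ℝ 1 v (closure (Omega3 h))) (hw : ContinuousOn w (closure (Omega3 h)))
    (hpdZ : EqOn (pdZ v) w (Omega3 h)) {x y : ℝ} (hx : x ∈ Ioo (0 : ℝ) 1)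
    (hy : y ∈ Ioo (0 : ℝ) 1) :
    ∫⁻ z in Ioo (-h) 0, ‖tildeDev h v (x, y, z)‖ₑ ^ q
      ≤ ENNReal.ofReal h ^ q * ∫⁻ z in Ioo (-h) 0, ‖pdZ v (x, y, z)‖ₑ ^ q := by
  have hline : Continuous fun s : ℝ => ((x, y, s) : Pt) := by fun_prop
  have hK : MapsTo (fun s : ℝ => ((x, y, s) : Pt)) (Icc (-h) 0) (closure (Omega3 h)) := by
    intro s hs
    rw [closure_omega3 hh]
    exact ⟨Ioo_subset_Icc_self hx, Ioo_subset_Icc_self hy, hs⟩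
  have hΩ : MapsTo (fun s : ℝ => ((x, y, s) : Pt)) (Ioo (-h) 0) (Omega3 h) :=
    fun s hs => ⟨hx, hy, hs⟩
  have hderiv : ∀ s ∈ Ioo (-h) 0, HasDerivAt (fun s => v (x, y, s)) (pdZ v (x, y, s)) s :=
    fun s hs => hasDerivAt_pdZ <| (hv.contDiffAt
      (closure_mem_nhds_of_isOpen isOpen_omega3 (hΩ hs))).differentiableAt one_ne_zero
  have hint : IntegrableOn (fun s => pdZ v (x, y, s)) (Ioo (-h) 0) :=
    ((hw.comp hline.continuousOn hK).integrableOn_Icc.mono_set Ioo_subset_Icc_self).congr_fun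
      (fun s hs => (hpdZ (hΩ hs)).symm) measurableSet_Ioo
  have := lintegral_enorm_sub_average_rpow_le (neg_lt_zero.2 hh) hq
    (hv.continuousOn.comp hline.continuousOn hK) hderiv hint
  simpa only [tildeDev, vertAvg, Function.comp_apply, sub_neg_eq_add, zero_add, one_div] using this

/-- The Poincaré-type inequality `‖ṽ‖_{L^q(Ω)} ≤ h ‖∂_z v‖_{L^q(Ω)}`. -/
theorem poincare_tildeDev (h : ℝ) (hh : 0 < h) (v : Pt → V2)
    (hv : ContDiffOn ℝ 1 v (closure (Omega3 h))) (q : ℝ) (hq : 1 ≤ q) :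
    LqNorm h q (tildeDev h v) ≤ h * LqNorm h q (pdZ v) := by
  have hq0 : 0 < q := by linarith
  obtain ⟨w, hw, hpdZ⟩ :=
    exists_continuousOn_closure_eqOn_pdZ isOpen_omega3 (uniqueDiffOn_closure_omega3 hh) hv
  have hint : IntegrableOn (fun p => ‖pdZ v p‖ ^ q) (Omega3 h) :=
    (((hw.norm.rpow_const fun _ _ => Or.inr hq0.le).integrableOn_compact
      (isCompact_closure_omega3 hh)).mono_set subset_closure).congr_fun
      (fun p hp => by rw [hpdZ hp]) isOpen_omega3.measurableSet
  have hmeas : AEMeasurable (fun p => ‖pdZ v p‖ₑ ^ q) (volume.restrict (Omega3 h)) :=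
    (((hw.mono subset_closure).congr hpdZ).aestronglyMeasurable
      isOpen_omega3.measurableSet).enorm.pow_const q
  exact LqNorm_le_mul_of_lintegral_le hh.le hq0 hint <| lintegral_omega3_le_of_slices
    (ENNReal.rpow_ne_top_of_nonneg hq0.le ENNReal.ofReal_ne_top) hmeas
    fun x hx y hy => lintegral_rpow_tildeDev_slice_le hh hq hv hw hpdZ hx hy
end
end
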